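/- Let n and k be positive integers with k < n/2 and n ≥ 8·(2k+2)². Then the generalized Petersen graph G_{n,k} has pathwidth at most 2k+2: pw(G_{n,k}) ≤ 2k+2. -/

import Mathlib

/-- A tree decomposition of a graph `G` over a tree `T`: bags cover all vertices and all
edges, and for each vertex the set of nodes whose bags contain it induces a connected
(hence subtree) part of `T`. -/
structure TreeDecomp {V : Type*} {ι : Type} (G : SimpleGraph V) (T : SimpleGraph ι) where
  bag : ι → Finset V
  cover : ∀ v : V, ∃ i, v ∈ bag i
  edgeCover : ∀ u v : V, G.Adj u v → ∃ i, u ∈ bag i ∧ v ∈ bag i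
  subtree : ∀ v : V, (T.induce {i : ι | v ∈ bag i}).Connected

/-- The treewidth of a finite graph: the minimum over all tree decompositions of
(maximum bag size − 1). -/
noncomputable def treewidth {V : Type*} [Fintype V] (G : SimpleGraph V) : ℕ :=
  sInf { w : ℕ | ∃ (ι : Type) (_ : Fintype ι) (T : SimpleGraph ι),
    T.IsTree ∧ ∃ D : TreeDecomp G T,
      (Finset.univ.sup fun i => (D.bag i).card) - 1 = w }

/-- A path decomposition of `G` with bags indexed by `Fin m` along a path: for each
vertex, the set of indices of bags containing it is an interval. -/
structure PathDecomp {V : Type*} (G : SimpleGraph V) (m : ℕ) where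
  bag : Fin m → Finset V
  cover : ∀ v : V, ∃ i, v ∈ bag i
  edgeCover : ∀ u v : V, G.Adj u v → ∃ i, u ∈ bag i ∧ v ∈ bag i
  interval : ∀ (v : V) (i j k : Fin m), i ≤ j → j ≤ k → v ∈ bag i → v ∈ bag k → v ∈ bag j

/-- The pathwidth of a finite graph: the minimum over all path decompositions of
(maximum bag size − 1). -/
noncomputable def pathwidth {V : Type*} [Fintype V] (G : SimpleGraph V) : ℕ :=
  sInf { w : ℕ | ∃ (m : ℕ) (D : PathDecomp G m),
    (Finset.univ.sup fun i => (D.bag i).card) - 1 = w }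

/-- The bandwidth of a finite graph: the minimum over all bijective numberings of the
vertices of the maximum stretch `|φ u − φ v|` over edges `uv`. -/
noncomputable def bandwidth {V : Type*} [Fintype V] (G : SimpleGraph V) : ℕ :=
  sInf { b : ℕ | ∃ φ : V ≃ Fin (Fintype.card V),
    ∀ u v : V, G.Adj u v → ((φ u : ℤ) - (φ v : ℤ)).natAbs ≤ b }

/-- The generalized Petersen graph `G_{n,k}` on vertex set `{v_1,…,v_n} ⊕ {u_1,…,u_n}`
(`Sum.inl i` is the outer vertex `v_i`, `Sum.inr i` the inner vertex `u_i`), with edges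
`v_i v_{i+1}`, `v_i u_i` and `u_i u_{i+k}`, indices read modulo `n`. -/
def genPetersen (n k : ℕ) : SimpleGraph (Fin n ⊕ Fin n) :=
  SimpleGraph.fromRel fun a b =>
    match a, b with
    | Sum.inl i, Sum.inl j => (j : ℕ) = ((i : ℕ) + 1) % n
    | Sum.inl i, Sum.inr j => j = i
    | Sum.inr i, Sum.inr j => (j : ℕ) = ((i : ℕ) + k) % n
    | _, _ => False

/-!
Sweep both cycles with a half-step index `t = 0, …, 2n - 1`. The hubs `v_0` and
`u_0, …, u_{k-1}`, which carry the edges wrapping around the cycles, stay in every bag; any other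
`v_j` occupies the bags `2j - 1, …, 2j + 1` and any other `u_j` the bags `2j - 2k, …, 2j`. Then
`v_j v_{j+1}` meets in bag `2j + 1`, and `v_j u_j`, `u_j u_{j+k}` meet in bag `2j`. Besides the
`k + 1` hubs, bag `t` holds at most `k + 2` vertices whose index is close to `t / 2`, hence at
most `2k + 3` vertices.
-/

section IntervalDecomposition

variable {V : Type*} [Fintype V]

def intervalBag (lo hi : V → ℕ) (t : ℕ) : Finset V :=
  Finset.univ.filter fun x => t ∈ Set.Icc (lo x) (hi x)

@[simp]
theorem mem_intervalBag {lo hi : V → ℕ} {t : ℕ} {x : V} :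
    x ∈ intervalBag lo hi t ↔ t ∈ Set.Icc (lo x) (hi x) := by
  simp [intervalBag]

def PathDecomp.ofIntervals (G : SimpleGraph V) (m : ℕ) (lo hi : V → ℕ)
    (hcover : ∀ x, ∃ t < m, t ∈ Set.Icc (lo x) (hi x))
    (hedge : ∀ x y, G.Adj x y → ∃ t < m, t ∈ Set.Icc (lo x) (hi x) ∧ t ∈ Set.Icc (lo y) (hi y)) :
    PathDecomp G m where
  bag t := intervalBag lo hi t
  cover x := by
    obtain ⟨t, htm, ht⟩ := hcover x
    exact ⟨⟨t, htm⟩, by simpa using ht⟩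
  edgeCover x y hxy := by
    obtain ⟨t, htm, hx, hy⟩ := hedge x y hxy
    exact ⟨⟨t, htm⟩, by simpa using hx, by simpa using hy⟩
  interval x i j k hij hjk hxi hxk := by
    simp only [mem_intervalBag, Set.mem_Icc] at hxi hxk ⊢
    exact ⟨hxi.1.trans (Fin.le_def.1 hij), (Fin.le_def.1 hjk).trans hxk.2⟩

theorem pathwidth_le_of_card_bag_le {G : SimpleGraph V} {m w : ℕ} (D : PathDecomp G m)
    (hD : ∀ i, (D.bag i).card ≤ w + 1) : pathwidth G ≤ w := by
  have hmem : (Finset.univ.sup fun i => (D.bag i).card) - 1 ∈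
      {w : ℕ | ∃ (m : ℕ) (D : PathDecomp G m), (Finset.univ.sup fun i => (D.bag i).card) - 1 = w} :=
    ⟨m, D, rfl⟩
  have hsup : (Finset.univ.sup fun i => (D.bag i).card) ≤ w + 1 :=
    Finset.sup_le fun i _ => hD i
  exact (Nat.sInf_le hmem).trans (by omega)

end IntervalDecomposition

section GenPetersen

variable {n : ℕ}

/-- For the hubs `v_0` and `u_0, …, u_{k-1}` the lower end is `0` by truncated subtraction. -/
def genPetersenLo (k : ℕ) : Fin n ⊕ Fin n → ℕ :=
  Sum.elim (fun j => 2 * j - 1) (fun j => 2 * j - 2 * k)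

def genPetersenHi (k : ℕ) : Fin n ⊕ Fin n → ℕ :=
  Sum.elim (fun j => if (j : ℕ) = 0 then 2 * n - 1 else 2 * j + 1)
    (fun j => if (j : ℕ) < k then 2 * n - 1 else 2 * j)

theorem Nat.add_mod_eq_self_or_lt {i n : ℕ} (k : ℕ) (hi : i < n) :
    (i + k) % n = i + k ∨ (i + k) % n < k := by
  rcases lt_or_ge (i + k) n with h | h
  · exact .inl (Nat.mod_eq_of_lt h)
  · refine .inr ?_
    calc (i + k) % n = (i + k - n) % n := Nat.mod_eq_sub_mod h
      _ ≤ i + k - n := Nat.mod_le _ _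
      _ < k := by omega

variable (k : ℕ)

lemma genPetersen_window_outer {i j : Fin n} (h : (j : ℕ) = (i + 1) % n) :
    2 * (i : ℕ) + 1 ∈ Set.Icc (genPetersenLo k (.inl i)) (genPetersenHi k (.inl i)) ∧
      2 * (i : ℕ) + 1 ∈ Set.Icc (genPetersenLo k (.inl j)) (genPetersenHi k (.inl j)) := by
  have := Nat.add_mod_eq_self_or_lt 1 i.isLt
  simp only [Set.mem_Icc, genPetersenLo, genPetersenHi, Sum.elim_inl]
  split_ifs <;> omega

lemma genPetersen_window_spoke (i : Fin n) :
    2 * (i : ℕ) ∈ Set.Icc (genPetersenLo k (.inl i)) (genPetersenHi k (.inl i)) ∧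
      2 * (i : ℕ) ∈ Set.Icc (genPetersenLo k (.inr i)) (genPetersenHi k (.inr i)) := by
  simp only [Set.mem_Icc, genPetersenLo, genPetersenHi, Sum.elim_inl, Sum.elim_inr]
  split_ifs <;> omega

lemma genPetersen_window_inner {i j : Fin n} (h : (j : ℕ) = (i + k) % n) :
    2 * (i : ℕ) ∈ Set.Icc (genPetersenLo k (.inr i)) (genPetersenHi k (.inr i)) ∧
      2 * (i : ℕ) ∈ Set.Icc (genPetersenLo k (.inr j)) (genPetersenHi k (.inr j)) := by
  have := Nat.add_mod_eq_self_or_lt k i.isLt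
  simp only [Set.mem_Icc, genPetersenLo, genPetersenHi, Sum.elim_inr]
  split_ifs <;> omega

lemma genPetersen_adj_exists_window {a b : Fin n ⊕ Fin n} (h : (genPetersen n k).Adj a b) :
    ∃ t < 2 * n, t ∈ Set.Icc (genPetersenLo k a) (genPetersenHi k a) ∧
      t ∈ Set.Icc (genPetersenLo k b) (genPetersenHi k b) := by
  rcases a with i | i <;> rcases b with j | j <;>
    simp only [genPetersen, SimpleGraph.fromRel_adj, ne_eq, Sum.inl.injEq, Sum.inr.injEq,
      reduceCtorEq, not_false_eq_true, true_and, or_false, false_or] at h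
  · rcases h with ⟨-, h | h⟩
    · exact ⟨_, by omega, genPetersen_window_outer k h⟩
    · exact ⟨_, by omega, (genPetersen_window_outer k h).symm⟩
  · subst j
    exact ⟨2 * i, by omega, genPetersen_window_spoke k i⟩
  · subst i
    exact ⟨2 * j, by omega, (genPetersen_window_spoke k j).symm⟩
  · rcases h with ⟨-, h | h⟩
    · exact ⟨_, by omega, genPetersen_window_inner k h⟩
    · exact ⟨_, by omega, (genPetersen_window_inner k h).symm⟩

/-- The `k + 1` hubs get the codes `0, …, k`. With `s = t / 2`, the other vertices of bag `t`
are `v_j` with `j ∈ {s, s + 1}` and `u_j` with `j ∈ [s, s + k]`, where `v_{s+1}` occurs only for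
odd `t` and `u_s` only for even `t`; coding `v_j ↦ j` and `u_j ↦ j + 1` thus injects them into
`[s, s + k + 1]`. -/
lemma card_intervalBag_genPetersen_le (t : ℕ) :
    (intervalBag (genPetersenLo (n := n) k) (genPetersenHi k) t).card ≤ 2 * k + 3 := by
  let code : Fin n ⊕ Fin n → ℕ :=
    Sum.elim (fun j => if (j : ℕ) = 0 then k else k + 1 + j - t / 2)
      (fun j => if (j : ℕ) < k then j else k + 2 + j - t / 2)
  have hmaps : Set.MapsTo code ↑(intervalBag (genPetersenLo (n := n) k) (genPetersenHi k) t)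
      (Finset.range (2 * k + 3)) := by
    rintro (j | j) hj <;>
      simp only [Finset.mem_coe, mem_intervalBag, Set.mem_Icc, genPetersenLo, genPetersenHi,
        Sum.elim_inl, Sum.elim_inr] at hj <;>
      simp only [code, Finset.coe_range, Set.mem_Iio, Sum.elim_inl, Sum.elim_inr] <;>
      split_ifs at hj ⊢ <;> omega
  have hinj : Set.InjOn code ↑(intervalBag (genPetersenLo (n := n) k) (genPetersenHi k) t) := by
    rintro (a | a) ha (b | b) hb hab <;>
      simp only [Finset.mem_coe, mem_intervalBag, Set.mem_Icc, genPetersenLo, genPetersenHi,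
        Sum.elim_inl, Sum.elim_inr] at ha hb <;>
      simp only [code, Sum.elim_inl, Sum.elim_inr, Sum.inl.injEq, Sum.inr.injEq,
        reduceCtorEq, Fin.ext_iff] at hab ⊢ <;>
      split_ifs at ha hb hab <;> omega
  simpa using Finset.card_le_card_of_injOn code hmaps hinj

end GenPetersen

theorem pathwidth_genPetersen_le_general (n k : ℕ) :
    pathwidth (genPetersen n k) ≤ 2 * k + 2 := by
  let D := PathDecomp.ofIntervals (genPetersen n k) (2 * n) (genPetersenLo k) (genPetersenHi k)
    (by
      rintro (i | i)
      exacts [⟨2 * i, by omega, (genPetersen_window_spoke k i).1⟩,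
        ⟨2 * i, by omega, (genPetersen_window_spoke k i).2⟩])
    (fun _ _ => genPetersen_adj_exists_window k)
  exact pathwidth_le_of_card_bag_le D fun i => card_intervalBag_genPetersen_le k i

/-- For positive integers `n, k` with `k < n/2` and `n ≥ 8·(2k+2)²`, the generalized
Petersen graph `G_{n,k}` has pathwidth at most `2k+2`. -/
theorem pathwidth_genPetersen_le (n k : ℕ) (hk : 1 ≤ k) (hkn : 2 * k < n)
    (hn : 8 * (2 * k + 2) ^ 2 ≤ n) :
    pathwidth (genPetersen n k) ≤ 2 * k + 2 :=
  pathwidth_genPetersen_le_general n k
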